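/- arXiv:1106.5735 — 5 statements merged into one kernel-verified Lean document; each statement's English description precedes it below -/
import Mathlib

section
/- For z ∈ ℂ one has θ(z, τ) = 0 if and only if z ∈ Λ, where Λ = ℤτ + ℤ. -/
open Complex Filter
open scoped Topology

noncomputable section

/-- The lattice `Λ = ℤτ + ℤ ⊂ ℂ` as a set. -/
def Lam (τ : ℂ) : Set ℂ := {c | ∃ l m : ℤ, c = l * τ + m}

/-- The infinite product `(y;q) = ∏_{j=0}^∞ (1 - y qʲ)`. -/
def qPoch (y q : ℂ) : ℂ := ∏' j : ℕ, (1 - y * q ^ j)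

/-- The first Jacobi theta function
`θ(z,τ) = i e^{πi(τ/4 - z)} (x;q)(q/x;q)(q;q)`, `q = e^{2πiτ}`, `x = e^{2πiz}`. -/
def theta (z τ : ℂ) : ℂ :=
  Complex.I * Complex.exp ((Real.pi : ℂ) * Complex.I * (τ / 4 - z)) *
    qPoch (Complex.exp (2 * (Real.pi : ℂ) * Complex.I * z))
      (Complex.exp (2 * (Real.pi : ℂ) * Complex.I * τ)) *
    qPoch (Complex.exp (2 * (Real.pi : ℂ) * Complex.I * τ) /
        Complex.exp (2 * (Real.pi : ℂ) * Complex.I * z))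
      (Complex.exp (2 * (Real.pi : ℂ) * Complex.I * τ)) *
    qPoch (Complex.exp (2 * (Real.pi : ℂ) * Complex.I * τ))
      (Complex.exp (2 * (Real.pi : ℂ) * Complex.I * τ))

/-- `θ'(z,τ)`, the derivative of `θ` in the `z` variable. -/
def thetaD (z τ : ℂ) : ℂ := deriv (fun u => theta u τ) z

/-- `σ_w(t,τ) = θ(w-t,τ)θ'(0,τ)/(θ(w,τ)θ(t,τ))`. -/
def sigmaW (w t τ : ℂ) : ℂ := theta (w - t) τ * thetaD 0 τ / (theta w τ * theta t τ)

/-!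
The exponential prefactor never vanishes, and for `‖q‖ < 1` the product `(y;q)` converges
absolutely, so it vanishes exactly when one of its factors does. With `x = e^{2πiz}`, the factors
of `(x;q)` vanish for `z ∈ -ℕτ + ℤ`, those of `(q/x;q)` for `z ∈ (ℕ+1)τ + ℤ`, and those of
`(q;q)` never, since `Im τ > 0`. The first two sets together make up `Λ`.
-/

open scoped Real

lemma qPoch_eq_zero_iff {y q : ℂ} (hq : ‖q‖ < 1) : qPoch y q = 0 ↔ ∃ j : ℕ, y * q ^ j = 1 := by
  rw [qPoch]
  constructor
  · contrapose!
    intro hne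
    simp_rw [sub_eq_add_neg]
    refine tprod_one_add_ne_zero_of_summable (fun j => ?_) ?_
    · rw [← sub_eq_add_neg, sub_ne_zero]
      exact (hne j).symm
    · simpa only [norm_neg, norm_mul, norm_pow] using
        (summable_geometric_of_lt_one (norm_nonneg q) hq).mul_left ‖y‖
  · rintro ⟨j, hj⟩
    exact tprod_of_exists_eq_zero ⟨j, by rw [hj, sub_self]⟩

lemma norm_exp_two_pi_I_mul_lt_one {τ : ℂ} (hτ : 0 < τ.im) : ‖exp (2 * π * I * τ)‖ < 1 := by
  simpa [Function.Periodic.qParam] using Function.Periodic.norm_qParam_lt_one one_pos hτ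

lemma exp_two_pi_I_mul_eq_one_iff {w : ℂ} : exp (2 * π * I * w) = 1 ↔ ∃ m : ℤ, w = m := by
  rw [exp_eq_one_iff]
  refine exists_congr fun m => ?_
  rw [mul_comm _ (2 * π * I), mul_right_inj' two_pi_I_ne_zero]

lemma exp_two_pi_I_mul_mul_pow (w τ : ℂ) (j : ℕ) :
    exp (2 * π * I * w) * exp (2 * π * I * τ) ^ j = exp (2 * π * I * (w + j * τ)) := by
  rw [← exp_nat_mul, ← exp_add]
  ring_nf

lemma qPoch_exp_eq_zero_iff {τ : ℂ} (hτ : 0 < τ.im) (w : ℂ) :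
    qPoch (exp (2 * π * I * w)) (exp (2 * π * I * τ)) = 0 ↔
      ∃ (j : ℕ) (m : ℤ), w + j * τ = m := by
  simp only [qPoch_eq_zero_iff (norm_exp_two_pi_I_mul_lt_one hτ), exp_two_pi_I_mul_mul_pow,
    exp_two_pi_I_mul_eq_one_iff]

lemma not_exists_add_nat_mul_eq_int {τ : ℂ} (hτ : 0 < τ.im) :
    ¬ ∃ (j : ℕ) (m : ℤ), τ + j * τ = m := by
  rintro ⟨j, m, h⟩
  have him := congrArg im h
  simp only [add_im, mul_im, natCast_re, natCast_im, zero_mul, add_zero, intCast_im] at him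
  nlinarith [(j.cast_nonneg : (0 : ℝ) ≤ j)]

lemma mem_Lam_iff {τ z : ℂ} :
    z ∈ Lam τ ↔
      (∃ (j : ℕ) (m : ℤ), z + j * τ = m) ∨ ∃ (j : ℕ) (m : ℤ), τ - z + j * τ = m := by
  constructor
  · rintro ⟨l, m, rfl⟩
    obtain ⟨j, rfl | rfl⟩ := Int.eq_nat_or_neg l
    · cases j with
      | zero => exact Or.inl ⟨0, m, by simp⟩
      | succ k => exact Or.inr ⟨k, -m, by push_cast; ring⟩
    · exact Or.inl ⟨j, m, by push_cast; ring⟩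
  · rintro (⟨j, m, h⟩ | ⟨j, m, h⟩)
    · exact ⟨-j, m, by push_cast; linear_combination h⟩
    · exact ⟨j + 1, -m, by push_cast; linear_combination -h⟩

/-- `θ(z,τ) = 0` iff `z ∈ Λ = ℤτ + ℤ`. -/
theorem theta_eq_zero_iff (τ : ℂ) (hτ : 0 < τ.im) (z : ℂ) :
    theta z τ = 0 ↔ z ∈ Lam τ := by
  have hquot : exp (2 * π * I * τ) / exp (2 * π * I * z) = exp (2 * π * I * (τ - z)) := by
    rw [← exp_sub, mul_sub]
  simp only [theta, hquot, mul_eq_zero, I_ne_zero, exp_ne_zero, false_or,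
    qPoch_exp_eq_zero_iff hτ, not_exists_add_nat_mul_eq_int hτ, or_false]
  exact mem_Lam_iff.symm

end
end

section
/- Let k ≥ 1 and w = (w₁,…,w_k) ∈ ℂ^k. There exists a nonzero entire function f : ℂ^k → ℂ satisfying, for every i = 1,…,k and every t ∈ ℂ^k, f(t + e_i) = f(t) and f(t + τ·e_i) = e^{2πi w_i}·f(t) (where e_i is the i-th standard basis vector), if and only if w ∈ Λ^k. -/
open Complex Filter
open scoped Topology

noncomputable section

/-! Restricting `f` to a line `z ↦ f (t₀ + z • eᵢ)` through a point where it does not vanish gives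
an entire `1`-periodic `g` with `g (z + τ) = e^{2πiwᵢ} g z`. By Cauchy's theorem on rectangles the
integral of an entire `1`-periodic function over a horizontal segment `[c, c + 1]` does not depend
on `c ∈ ℂ`. Applied to `e^{-2πinz} g z`, which has multiplier `e^{2πi(wᵢ - nτ)}` under `z ↦ z + τ`,
this forces the `n`-th Fourier coefficient of `g` to vanish unless `wᵢ - nτ ∈ ℤ`; as `g ≠ 0`, some
coefficient is nonzero, so `wᵢ ∈ Λ`. Conversely, for `wᵢ = lᵢτ + mᵢ` the character
`t ↦ e^{2πi ∑ lⱼ tⱼ}` has the required quasi-periodicity. -/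

open Function
open scoped Real

theorem AddCircle.eq_zero_of_fourierCoeff_eq_zero {T : ℝ} [Fact (0 < T)] {f : C(AddCircle T, ℂ)}
    (hf : ∀ n, fourierCoeff f n = 0) : f = 0 := by
  refine ContinuousMap.toLp_injective (p := 2) (haarAddCircle (T := T)) (𝕜 := ℂ) ?_
  rw [map_zero]
  refine fourierBasis.repr.injective ?_
  ext n
  rw [fourierBasis_repr, fourierCoeff_toLp, hf n, map_zero]
  rfl

theorem Function.Periodic.eq_zero_of_fourierCoeff_lift_eq_zero {T : ℝ} [Fact (0 < T)]
    {φ : ℝ → ℂ} (hφ : Continuous φ) (hper : Periodic φ T) (hc : ∀ n, fourierCoeff hper.lift n = 0) :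
    φ = 0 := by
  let f : C(AddCircle T, ℂ) := ⟨hper.lift, hφ.quotient_liftOn' _⟩
  funext x
  exact congr($(AddCircle.eq_zero_of_fourierCoeff_eq_zero (f := f) hc) x)

section PeriodicIntegral

variable {E : Type*} [NormedAddCommGroup E] [NormedSpace ℂ E] {h : ℂ → E} {T : ℝ}

theorem Function.Periodic.intervalIntegral_add_mul_I_eq (hd : Differentiable ℂ h)
    (hper : Periodic h T) (y : ℝ) :
    ∫ x : ℝ in 0..T, h (x + y * I) = ∫ x : ℝ in 0..T, h x := by
  have hrect := integral_boundary_rect_eq_zero_of_differentiableOn h 0 (T + y * I)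
    hd.differentiableOn
  have hsides : ∫ s : ℝ in (0 : ℝ)..y, h (T + s * I) = ∫ s : ℝ in (0 : ℝ)..y, h (s * I) :=
    intervalIntegral.integral_congr fun s _ => by simpa only [add_comm] using hper (s * I)
  simp only [zero_re, zero_im, add_re, add_im, ofReal_re, ofReal_im, mul_I_re, mul_I_im,
    ofReal_zero, zero_mul, add_zero, zero_add, neg_zero, hsides, add_sub_cancel_right] at hrect
  exact (sub_eq_zero.mp hrect).symm

theorem Function.Periodic.intervalIntegral_comp_add_eq (hd : Differentiable ℂ h)
    (hper : Periodic h T) (c : ℂ) :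
    ∫ x : ℝ in 0..T, h (x + c) = ∫ x : ℝ in 0..T, h x := by
  have hslice : Periodic (fun x : ℝ => h (x + c.im * I)) T := fun x => by
    simpa only [ofReal_add, add_right_comm _ (T : ℂ)] using hper (x + c.im * I)
  calc ∫ x : ℝ in 0..T, h (x + c) = ∫ x : ℝ in 0..T, h ((x + c.re : ℝ) + c.im * I) := by
        simp_rw [ofReal_add, add_assoc, re_add_im]
    _ = ∫ x : ℝ in c.re..c.re + T, h (x + c.im * I) := by
        rw [intervalIntegral.integral_comp_add_right (fun x : ℝ => h (x + c.im * I)), zero_add,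
          add_comm T]
    _ = ∫ x : ℝ in 0..0 + T, h (x + c.im * I) := hslice.intervalIntegral_add_eq _ _
    _ = ∫ x : ℝ in 0..T, h x := by rw [zero_add, hper.intervalIntegral_add_mul_I_eq hd]

theorem Function.Periodic.eq_one_of_intervalIntegral_ne_zero {τ μ : ℂ} (hd : Differentiable ℂ h)
    (hper : Periodic h T) (hτ : ∀ z, h (z + τ) = μ • h z) (hI : ∫ x : ℝ in 0..T, h x ≠ 0) :
    μ = 1 := by
  have hfix : μ • ∫ x : ℝ in 0..T, h x = ∫ x : ℝ in 0..T, h x := by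
    rw [← intervalIntegral.integral_smul, ← hper.intervalIntegral_comp_add_eq hd τ]
    simp_rw [hτ]
  have hker : (μ - 1) • ∫ x : ℝ in 0..T, h x = 0 := by rw [sub_smul, one_smul, hfix, sub_self]
  exact sub_eq_zero.mp ((smul_eq_zero.mp hker).resolve_right hI)

end PeriodicIntegral

theorem periodic_cexp_neg_two_pi_I_int_mul (n : ℤ) :
    Periodic (fun z => cexp (-(2 * π * I * n * z))) 1 := fun z =>
  exp_eq_exp_iff_exists_int.mpr ⟨-n, by push_cast; ring⟩

theorem Function.Periodic.exists_intervalIntegral_fourier_ne_zero {g : ℂ → ℂ}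
    (hd : Differentiable ℂ g) (hper : Periodic g 1) (hg : g ≠ 0) :
    ∃ n : ℤ, ∫ x : ℝ in 0..1, cexp (-(2 * π * I * n * x)) * g x ≠ 0 := by
  obtain ⟨z₀, hz₀⟩ := Function.ne_iff.mp hg
  by_contra! hzero
  have hslice : Periodic (fun x : ℝ => g (x + z₀)) 1 := fun x => by
    simpa only [ofReal_add, ofReal_one, add_right_comm _ (1 : ℂ)] using hper (x + z₀)
  suffices hzero' : (fun x : ℝ => g (x + z₀)) = 0 from hz₀ (by simpa using congr_fun hzero' 0)
  refine hslice.eq_zero_of_fourierCoeff_lift_eq_zero (hd.continuous.comp (by fun_prop)) fun n => ?_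
  have hn := ((periodic_cexp_neg_two_pi_I_int_mul n).mul hper).intervalIntegral_comp_add_eq
    (by fun_prop) z₀
  simp only [Pi.mul_apply, hzero n] at hn
  -- the `n`-th coefficient of the slice through `z₀` is `e^{2πinz₀}` times `hn`'s left-hand side
  have hterm : ∀ x : ℝ, fourier (-n) (x : AddCircle (1 : ℝ)) • hslice.lift x =
      cexp (2 * π * I * n * z₀) * (cexp (-(2 * π * I * n * (x + z₀))) * g (x + z₀)) := fun x => by
    rw [fourier_coe_apply, Periodic.lift_coe, smul_eq_mul, ← mul_assoc, ← exp_add]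
    congr 2
    push_cast
    ring
  simp_rw [fourierCoeff_eq_intervalIntegral _ _ 0, zero_add, hterm,
    intervalIntegral.integral_const_mul, hn, mul_zero, smul_zero]

theorem mem_Lam_of_quasiperiodic {τ w : ℂ} {g : ℂ → ℂ} (hd : Differentiable ℂ g)
    (hper : Periodic g 1) (hτ : ∀ z, g (z + τ) = cexp (2 * π * I * w) * g z) (hg : g ≠ 0) :
    w ∈ Lam τ := by
  obtain ⟨n, hn⟩ := hper.exists_intervalIntegral_fourier_ne_zero hd hg
  have hμ := ((periodic_cexp_neg_two_pi_I_int_mul n).mul hper).eq_one_of_intervalIntegral_ne_zero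
    (τ := τ) (μ := cexp (2 * π * I * (w - n * τ))) (by fun_prop) (fun z => ?_) hn
  · obtain ⟨m, hm⟩ := exp_eq_one_iff.mp hμ
    have hw : w - n * τ = m := mul_left_cancel₀ two_pi_I_ne_zero (hm.trans (mul_comm _ _))
    exact ⟨n, m, by linear_combination hw⟩
  · simp only [Pi.mul_apply, smul_eq_mul, hτ, ← mul_assoc, ← exp_add]
    congr 2
    ring

theorem mem_Lam_of_quasiperiodic_pi {ι : Type*} [Fintype ι] [DecidableEq ι] {τ : ℂ}
    {w : ι → ℂ} {f : (ι → ℂ) → ℂ} (hd : Differentiable ℂ f) (hf : f ≠ 0)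
    (h1 : ∀ i t, f (t + Pi.single i 1) = f t)
    (hτ : ∀ i t, f (t + Pi.single i τ) = cexp (2 * π * I * w i) * f t) (i : ι) :
    w i ∈ Lam τ := by
  obtain ⟨t₀, ht₀⟩ := Function.ne_iff.mp hf
  have hline : ∀ z c, t₀ + Pi.single i (z + c) = t₀ + Pi.single i z + Pi.single i c := by
    simp [Pi.single_add, add_assoc]
  exact mem_Lam_of_quasiperiodic (g := fun z => f (t₀ + Pi.single i z))
    (hd.comp ((differentiable_const t₀).add
      (ContinuousLinearMap.single ℂ (fun _ : ι => ℂ) i).differentiable))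
    (fun z => by simp only [hline, h1]) (fun z => by simp only [hline, hτ])
    (Function.ne_iff.mpr ⟨0, by simpa using ht₀⟩)

theorem exists_quasiperiodic_of_mem_Lam {ι : Type*} [Fintype ι] [DecidableEq ι] {τ : ℂ}
    {w : ι → ℂ} (hw : ∀ i, w i ∈ Lam τ) :
    ∃ f : (ι → ℂ) → ℂ, f ≠ 0 ∧ Differentiable ℂ f ∧
      (∀ i t, f (t + Pi.single i 1) = f t) ∧
      (∀ i t, f (t + Pi.single i τ) = cexp (2 * π * I * w i) * f t) := by
  choose l m hlm using hw
  let L : ι → ℂ := fun j => l j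
  have hshift : ∀ i c t, cexp (2 * π * I * (L ⬝ᵥ (t + Pi.single i c))) =
      cexp (2 * π * I * (l i * c)) * cexp (2 * π * I * (L ⬝ᵥ t)) := fun i c t => by
    rw [dotProduct_add, dotProduct_single, mul_add, exp_add, mul_comm]
  refine ⟨fun t => cexp (2 * π * I * (L ⬝ᵥ t)), fun h => exp_ne_zero _ (congr_fun h 0),
    by unfold dotProduct; fun_prop, fun i t => ?_, fun i t => ?_⟩
  · beta_reduce
    rw [hshift, exp_eq_one_iff.mpr ⟨l i, by ring⟩, one_mul]
  · beta_reduce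
    rw [hshift, hlm i]
    congr 1
    exact exp_eq_exp_iff_exists_int.mpr ⟨-m i, by push_cast; ring⟩

theorem exists_quasiperiodic_entire_iff_multi_general (τ : ℂ)
    (k : ℕ) (w : Fin k → ℂ) :
    (∃ f : (Fin k → ℂ) → ℂ, f ≠ 0 ∧ Differentiable ℂ f ∧
      (∀ i : Fin k, ∀ t : Fin k → ℂ, f (t + Pi.single i 1) = f t) ∧
      (∀ i : Fin k, ∀ t : Fin k → ℂ,
        f (t + Pi.single i τ) = Complex.exp (2 * (Real.pi : ℂ) * Complex.I * w i) * f t)) ↔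
    (∀ i : Fin k, w i ∈ Lam τ) :=
  ⟨fun ⟨_, hf, hd, h1, hτ⟩ => mem_Lam_of_quasiperiodic_pi hd hf h1 hτ,
    exists_quasiperiodic_of_mem_Lam⟩

/-- There is a nonzero entire function on `ℂ^k` with `f(t+eᵢ)=f(t)`,
`f(t+τeᵢ)=e^{2πiwᵢ}f(t)` for all `i` iff `w ∈ Λ^k`. -/
theorem exists_quasiperiodic_entire_iff_multi (τ : ℂ) (hτ : 0 < τ.im)
    (k : ℕ) (hk : 1 ≤ k) (w : Fin k → ℂ) :
    (∃ f : (Fin k → ℂ) → ℂ, f ≠ 0 ∧ Differentiable ℂ f ∧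
      (∀ i : Fin k, ∀ t : Fin k → ℂ, f (t + Pi.single i 1) = f t) ∧
      (∀ i : Fin k, ∀ t : Fin k → ℂ,
        f (t + Pi.single i τ) = Complex.exp (2 * (Real.pi : ℂ) * Complex.I * w i) * f t)) ↔
    (∀ i : Fin k, w i ∈ Lam τ) :=
  exists_quasiperiodic_entire_iff_multi_general τ k w

end
end

section
/- Let a = (a_{ij}) be a k×k integer matrix with det a ≠ 0, z, w ∈ ℂ^k, and let C, D ∈ ℤ^k, v ∈ ℂ^k satisfy ∑_{j=1}^k a_{ij} v_j = C_iτ + D_i + w_i for all i, with v_j ∉ Λ for every j. Let A, B ∈ ℤ^k and u ∈ ℂ^k satisfy ∑_{i=1}^k u_i a_{ij} = A_jτ + B_j + z_j for all j. Define F(t) = det a · e^{−2πi ∑_i C_i t_i} · ∏_j σ_{v_j}(∑_i t_i a_{ij} − z_j, τ). Then for every t ∈ ℂ^k with ∑_i t_i a_{ij} ∉ Λ for all j, F(t₁+u₁, …, t_k+u_k) = M(u,v) · det a · e^{−2πi ∑_i C_i t_i} · ∏_j σ_{v_j}(∑_i t_i a_{ij}, τ), where M(u,v) = e^{2πi ∑_{i=1}^k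 (A_i v_i − C_i u_i)}. -/
open Complex Filter
open scoped Topology

noncomputable section

/-! The product formula gives `(x;q) = (1 - x)(xq;q)`, from which `θ(z + 1) = -θ(z)` and
`θ(z + τ) = -e^{-πi(τ + 2z)} θ(z)`. Hence `σ_w(·,τ)` has period `1` and multiplier `e^{2πiw}`
under `t ↦ t + τ`, so `σ_w(t + lτ + m) = e^{2πilw} σ_w(t)`. Replacing `t` by `t + u` moves the
`j`-th argument `∑ tᵢaᵢⱼ - zⱼ` to `∑ tᵢaᵢⱼ + Aⱼτ + Bⱼ`; these multipliers together with the change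
`e^{-2πi∑Cᵢuᵢ}` of the exponential prefactor make up `M(u,v)`. -/

lemma multipliable_one_sub_mul_pow {q : ℂ} (hq : ‖q‖ < 1) (y : ℂ) :
    Multipliable fun j : ℕ => 1 - y * q ^ j := by
  have hsum : Summable fun j : ℕ => ‖-(y * q ^ j)‖ := by
    simp only [norm_neg, norm_mul, norm_pow]
    exact (summable_geometric_of_lt_one (norm_nonneg q) hq).mul_left ‖y‖
  simpa only [sub_eq_add_neg] using multipliable_one_add_of_summable hsum

lemma qPoch_eq_one_sub_mul {q : ℂ} (hq : ‖q‖ < 1) (y : ℂ) :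
    qPoch y q = (1 - y) * qPoch (y * q) q := by
  have hmul : Multipliable fun j : ℕ => 1 - y * q ^ (j + 1) := by
    simpa only [pow_succ', mul_assoc] using multipliable_one_sub_mul_pow hq (y * q)
  rw [qPoch, qPoch, tprod_eq_zero_mul' (f := fun j => 1 - y * q ^ j) hmul, pow_zero, mul_one]
  exact congrArg _ (tprod_congr fun j => by rw [pow_succ', mul_assoc])

lemma norm_exp_two_pi_I_mul_lt_one_s13 {τ : ℂ} (hτ : 0 < τ.im) :
    ‖Complex.exp (2 * (Real.pi : ℂ) * Complex.I * τ)‖ < 1 :=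
  UpperHalfPlane.norm_exp_two_pi_I_lt_one ⟨τ, hτ⟩

lemma theta_add_one (z τ : ℂ) : theta (z + 1) τ = -theta z τ := by
  have hx : Complex.exp (2 * (Real.pi : ℂ) * Complex.I * (z + 1)) =
      Complex.exp (2 * (Real.pi : ℂ) * Complex.I * z) := by
    rw [mul_add, mul_one, Complex.exp_add, Complex.exp_two_pi_mul_I, mul_one]
  have hpre : Complex.exp ((Real.pi : ℂ) * Complex.I * (τ / 4 - (z + 1))) =
      -Complex.exp ((Real.pi : ℂ) * Complex.I * (τ / 4 - z)) := by
    rw [show (Real.pi : ℂ) * Complex.I * (τ / 4 - (z + 1)) =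
        (Real.pi : ℂ) * Complex.I * (τ / 4 - z) - Real.pi * Complex.I by ring,
      Complex.exp_sub, Complex.exp_pi_mul_I, div_neg, div_one]
  rw [theta, theta, hx, hpre]
  ring

lemma theta_add_tau {τ : ℂ} (hτ : 0 < τ.im) (z : ℂ) :
    theta (z + τ) τ = -Complex.exp (-((Real.pi : ℂ) * Complex.I) * (τ + 2 * z)) * theta z τ := by
  have hpre : Complex.exp ((Real.pi : ℂ) * Complex.I * (τ / 4 - (z + τ))) =
      Complex.exp (-((Real.pi : ℂ) * Complex.I) * (τ + 2 * z)) *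
        Complex.exp ((Real.pi : ℂ) * Complex.I * (τ / 4 - z)) *
        Complex.exp (2 * (Real.pi : ℂ) * Complex.I * z) := by
    rw [← Complex.exp_add, ← Complex.exp_add]
    ring_nf
  have hq := norm_exp_two_pi_I_mul_lt_one_s13 hτ
  have hq0 := Complex.exp_ne_zero (2 * (Real.pi : ℂ) * Complex.I * τ)
  have hx0 := Complex.exp_ne_zero (2 * (Real.pi : ℂ) * Complex.I * z)
  rw [theta, theta, mul_add, Complex.exp_add, hpre]
  generalize Complex.exp (2 * (Real.pi : ℂ) * Complex.I * τ) = q at hq hq0 ⊢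
  generalize Complex.exp (2 * (Real.pi : ℂ) * Complex.I * z) = x at hx0 ⊢
  have hinv := qPoch_eq_one_sub_mul hq x⁻¹
  rw [inv_mul_eq_div] at hinv
  rw [show q / (x * q) = x⁻¹ by field_simp, hinv, qPoch_eq_one_sub_mul hq x]
  field_simp
  ring

lemma sigmaW_periodic (w τ : ℂ) : Function.Periodic (fun t => sigmaW w t τ) 1 := by
  intro t
  have hnum := theta_add_one (w - (t + 1)) τ
  rw [show w - (t + 1) + 1 = w - t by ring] at hnum
  simp only [sigmaW]
  rw [theta_add_one, hnum, mul_neg, div_neg, neg_mul, neg_div]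

lemma sigmaW_add_tau {τ : ℂ} (hτ : 0 < τ.im) (w t : ℂ) :
    sigmaW w (t + τ) τ = Complex.exp (2 * (Real.pi : ℂ) * Complex.I * w) * sigmaW w t τ := by
  have hnum := theta_add_tau hτ (w - (t + τ))
  rw [show w - (t + τ) + τ = w - t by ring] at hnum
  have hexp : Complex.exp (2 * (Real.pi : ℂ) * Complex.I * w) *
      Complex.exp (-((Real.pi : ℂ) * Complex.I) * (τ + 2 * (w - (t + τ)))) =
      (Complex.exp (-((Real.pi : ℂ) * Complex.I) * (τ + 2 * t)))⁻¹ := by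
    rw [← Complex.exp_neg, ← Complex.exp_add]
    ring_nf
  rw [sigmaW, sigmaW, theta_add_tau hτ, hnum]
  linear_combination theta (w - (t + τ)) τ * thetaD 0 τ / (theta w τ * theta t τ) * hexp

lemma apply_add_zsmul_eq_zpow_mul {G M : Type*} [AddGroup G] [CommGroupWithZero M]
    {f : G → M} {c : G} {m : M} (hm : m ≠ 0) (h : ∀ t, f (t + c) = m * f t) (n : ℤ) (t : G) :
    f (t + n • c) = m ^ n * f t := by
  induction n using Int.induction_on with
  | zero => simp
  | succ n ih =>
    rw [add_one_zsmul, ← add_assoc, h, ih, zpow_add_one₀ hm, mul_comm (m ^ _) m, mul_assoc]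
  | pred n ih =>
    have hstep := h (t + (-(n : ℤ) - 1) • c)
    rw [add_assoc, ← add_one_zsmul, sub_add_cancel, ih] at hstep
    rw [zpow_sub_one₀ hm, mul_right_comm, hstep, mul_comm, inv_mul_cancel_left₀ hm]

lemma sigmaW_add_int_mul_add_int {τ : ℂ} (hτ : 0 < τ.im) (w t : ℂ) (l m : ℤ) :
    sigmaW w (t + (l * τ + m)) τ =
      Complex.exp (l * (2 * (Real.pi : ℂ) * Complex.I * w)) * sigmaW w t τ := by
  have hlat := apply_add_zsmul_eq_zpow_mul (f := fun t => sigmaW w t τ) (Complex.exp_ne_zero _)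
    (sigmaW_add_tau hτ w) l t
  rw [zsmul_eq_mul] at hlat
  rw [← add_assoc, Complex.exp_int_mul, ← hlat]
  simpa using (sigmaW_periodic w τ).int_mul m (t + l * τ)

theorem omega_v_shift_general (τ : ℂ) (hτ : 0 < τ.im)
    (k : ℕ) (a : Matrix (Fin k) (Fin k) ℤ)
    (z : Fin k → ℂ) (C : Fin k → ℤ) (v : Fin k → ℂ)
    (A B : Fin k → ℤ) (u : Fin k → ℂ)
    (hu : ∀ j : Fin k, ∑ i, u i * (a i j : ℂ) = (A j : ℂ) * τ + (B j : ℂ) + z j)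
    (F : (Fin k → ℂ) → ℂ)
    (hF : ∀ t : Fin k → ℂ, F t =
      (a.det : ℂ) * Complex.exp (-(2 * (Real.pi : ℂ) * Complex.I) * ∑ i, (C i : ℂ) * t i) *
        ∏ j, sigmaW (v j) ((∑ i, t i * (a i j : ℂ)) - z j) τ)
    (t : Fin k → ℂ) :
    F (fun i => t i + u i) =
      Complex.exp (2 * (Real.pi : ℂ) * Complex.I * ∑ i, ((A i : ℂ) * v i - (C i : ℂ) * u i)) *
        ((a.det : ℂ) *
          Complex.exp (-(2 * (Real.pi : ℂ) * Complex.I) * ∑ i, (C i : ℂ) * t i) *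
          ∏ j, sigmaW (v j) (∑ i, t i * (a i j : ℂ)) τ) := by
  have hshift : ∀ j, sigmaW (v j) ((∑ i, (t i + u i) * (a i j : ℂ)) - z j) τ =
      Complex.exp (A j * (2 * (Real.pi : ℂ) * Complex.I * v j)) *
        sigmaW (v j) (∑ i, t i * (a i j : ℂ)) τ := by
    intro j
    rw [← sigmaW_add_int_mul_add_int hτ _ _ (A j) (B j)]
    congr 1
    simp only [add_mul, Finset.sum_add_distrib, hu j]
    ring
  have hexp : Complex.exp (-(2 * (Real.pi : ℂ) * Complex.I) * ∑ i, (C i : ℂ) * (t i + u i)) *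
        Complex.exp (∑ j, A j * (2 * (Real.pi : ℂ) * Complex.I * v j)) =
      Complex.exp (2 * (Real.pi : ℂ) * Complex.I * ∑ i, ((A i : ℂ) * v i - (C i : ℂ) * u i)) *
        Complex.exp (-(2 * (Real.pi : ℂ) * Complex.I) * ∑ i, (C i : ℂ) * t i) := by
    rw [← Complex.exp_add, ← Complex.exp_add]
    congr 1
    simp only [Finset.mul_sum, ← Finset.sum_add_distrib]
    exact Finset.sum_congr rfl fun i _ => by ring
  rw [hF, Finset.prod_congr rfl fun j _ => hshift j, Finset.prod_mul_distrib, ← Complex.exp_sum]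
  linear_combination ((a.det : ℂ) * ∏ j, sigmaW (v j) (∑ i, t i * (a i j : ℂ)) τ) * hexp

/-- Shifting by a solution `u` of `∑ uᵢaᵢⱼ = Aⱼτ + Bⱼ + zⱼ`:
`F(t+u) = M(u,v)·det a·e^{-2πi∑Cᵢtᵢ}·∏ σ_{vⱼ}(∑tᵢaᵢⱼ,τ)` with
`M(u,v) = e^{2πi∑(Aᵢvᵢ - Cᵢuᵢ)}`. -/
theorem omega_v_shift (τ : ℂ) (hτ : 0 < τ.im)
    (k : ℕ) (a : Matrix (Fin k) (Fin k) ℤ) (ha : a.det ≠ 0)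
    (z w : Fin k → ℂ) (C D : Fin k → ℤ) (v : Fin k → ℂ)
    (hv : ∀ i : Fin k, ∑ j, (a i j : ℂ) * v j = (C i : ℂ) * τ + (D i : ℂ) + w i)
    (hvL : ∀ j : Fin k, v j ∉ Lam τ)
    (A B : Fin k → ℤ) (u : Fin k → ℂ)
    (hu : ∀ j : Fin k, ∑ i, u i * (a i j : ℂ) = (A j : ℂ) * τ + (B j : ℂ) + z j)
    (F : (Fin k → ℂ) → ℂ)
    (hF : ∀ t : Fin k → ℂ, F t =
      (a.det : ℂ) * Complex.exp (-(2 * (Real.pi : ℂ) * Complex.I) * ∑ i, (C i : ℂ) * t i) *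
        ∏ j, sigmaW (v j) ((∑ i, t i * (a i j : ℂ)) - z j) τ)
    (t : Fin k → ℂ)
    (ht : ∀ j : Fin k, (∑ i, t i * (a i j : ℂ)) ∉ Lam τ) :
    F (fun i => t i + u i) =
      Complex.exp (2 * (Real.pi : ℂ) * Complex.I * ∑ i, ((A i : ℂ) * v i - (C i : ℂ) * u i)) *
        ((a.det : ℂ) *
          Complex.exp (-(2 * (Real.pi : ℂ) * Complex.I) * ∑ i, (C i : ℂ) * t i) *
          ∏ j, sigmaW (v j) (∑ i, t i * (a i j : ℂ)) τ) :=
  omega_v_shift_general τ hτ k a z C v A B u hu F hF t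
end
end

section
/- For c ∈ ℂ write c = c_ℝ + τ·c_τ with c_ℝ, c_τ ∈ ℝ (this decomposition is unique since Im τ > 0). Let a = (a_{ij}) be a k×k integer matrix, z, w ∈ ℂ^k, A, B, C, D ∈ ℤ^k and u, v ∈ ℂ^k satisfy ∑_{i=1}^k u_i a_{ij} = A_jτ + B_j + z_j for all j and ∑_{j=1}^k a_{ij} v_j = C_iτ + D_i + w_i for all i. Then ∑_{i=1}^k (A_i v_i − C_i u_i) = ∑_{i=1}^k (A_i v_{i,ℝ} − B_i v_{i,τ}) + ∑_{i=1}^k (u_i w_{i,τ} − z_i v_{i,τ}). -/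
open Complex Filter
open scoped Topology

noncomputable section

/-- With `c = c_ℝ + τ c_τ` (`c_ℝ, c_τ ∈ ℝ`),
`∑(Aᵢvᵢ - Cᵢuᵢ) = ∑(Aᵢv_{i,ℝ} - Bᵢv_{i,τ}) + ∑(uᵢw_{i,τ} - zᵢv_{i,τ})`. -/
theorem M_exponent_formula (τ : ℂ) (hτ : 0 < τ.im)
    (k : ℕ) (a : Matrix (Fin k) (Fin k) ℤ)
    (z w u v : Fin k → ℂ) (A B C D : Fin k → ℤ)
    (vR vT wR wT : Fin k → ℝ)
    (hvdec : ∀ i : Fin k, v i = (vR i : ℂ) + τ * (vT i : ℂ))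
    (hwdec : ∀ i : Fin k, w i = (wR i : ℂ) + τ * (wT i : ℂ))
    (hu : ∀ j : Fin k, ∑ i, u i * (a i j : ℂ) = (A j : ℂ) * τ + (B j : ℂ) + z j)
    (hv : ∀ i : Fin k, ∑ j, (a i j : ℂ) * v j = (C i : ℂ) * τ + (D i : ℂ) + w i) :
    ∑ i, ((A i : ℂ) * v i - (C i : ℂ) * u i) =
      ∑ i, ((A i : ℂ) * (vR i : ℂ) - (B i : ℂ) * (vT i : ℂ)) +
        ∑ i, (u i * (wT i : ℂ) - z i * (vT i : ℂ)) := by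
  -- Real component extraction: ∑ⱼ aᵢⱼ vT_j = Cᵢ + wT_i
  have key : ∀ i : Fin k, ∑ j, (a i j : ℝ) * vT j = (C i : ℝ) + wT i := by
    intro i
    have h := hv i
    have h2 : (∑ j, (a i j : ℂ) * v j).im = ((C i : ℂ) * τ + (D i : ℂ) + w i).im := by
      rw [h]
    rw [Complex.im_sum] at h2
    have hL : ∑ j, ((a i j : ℂ) * v j).im = (∑ j, (a i j : ℝ) * vT j) * τ.im := by
      rw [Finset.sum_mul]
      refine Finset.sum_congr rfl fun j _ => ?_
      rw [hvdec j]
      simp [Complex.mul_im, Complex.add_im]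
      ring
    have hR : ((C i : ℂ) * τ + (D i : ℂ) + w i).im = ((C i : ℝ) + wT i) * τ.im := by
      rw [hwdec i]
      simp [Complex.mul_im, Complex.add_im]
      ring
    rw [hL, hR] at h2
    exact mul_right_cancel₀ (ne_of_gt hτ) h2
  have keyC : ∀ i : Fin k, ∑ j, (a i j : ℂ) * (vT j : ℂ) = (C i : ℂ) + (wT i : ℂ) := by
    intro i
    have := key i
    have := congrArg (fun r : ℝ => (r : ℂ)) this
    push_cast at this
    exact this
  have hCu : ∑ i, (C i : ℂ) * u i
      = ∑ j, ((A j : ℂ) * τ + (B j : ℂ) + z j) * (vT j : ℂ) - ∑ i, u i * (wT i : ℂ) := by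
    have h1 : ∑ i, (C i : ℂ) * u i
        = ∑ i, (∑ j, (a i j : ℂ) * (vT j : ℂ)) * u i - ∑ i, u i * (wT i : ℂ) := by
      rw [← Finset.sum_sub_distrib]
      refine Finset.sum_congr rfl fun i _ => ?_
      rw [keyC i]; ring
    rw [h1]
    congr 1
    calc ∑ i, (∑ j, (a i j : ℂ) * (vT j : ℂ)) * u i
        = ∑ i, ∑ j, (a i j : ℂ) * (vT j : ℂ) * u i := by
          simp [Finset.sum_mul]
      _ = ∑ j, ∑ i, (a i j : ℂ) * (vT j : ℂ) * u i := Finset.sum_comm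
      _ = ∑ j, ((A j : ℂ) * τ + (B j : ℂ) + z j) * (vT j : ℂ) := by
          refine Finset.sum_congr rfl fun j _ => ?_
          rw [← hu j, Finset.sum_mul]
          refine Finset.sum_congr rfl fun i _ => ?_
          ring
  have hAv : ∑ i, (A i : ℂ) * v i
      = ∑ i, (A i : ℂ) * (vR i : ℂ) + τ * ∑ i, (A i : ℂ) * (vT i : ℂ) := by
    rw [Finset.mul_sum, ← Finset.sum_add_distrib]
    refine Finset.sum_congr rfl fun i _ => ?_
    rw [hvdec i]; ring
  have hexp : ∑ j, ((A j : ℂ) * τ + (B j : ℂ) + z j) * (vT j : ℂ)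
      = τ * ∑ j, (A j : ℂ) * (vT j : ℂ) + ∑ j, (B j : ℂ) * (vT j : ℂ)
        + ∑ j, z j * (vT j : ℂ) := by
    rw [Finset.mul_sum, ← Finset.sum_add_distrib, ← Finset.sum_add_distrib]
    refine Finset.sum_congr rfl fun j _ => ?_
    ring
  rw [Finset.sum_sub_distrib, Finset.sum_sub_distrib, Finset.sum_sub_distrib,
    hAv, hCu, hexp]
  ring
end
end

section
/- Let a = (a_{ij}) be a k×k integer matrix with det a ≠ 0, and let z, w ∈ ℂ^k. Let U ⊂ ℂ^k be a set of (det a)² points such that for each u ∈ U and each j, ∑_{i=1}^k u_i a_{ij} − z_j ∈ Λ, and the images of the points of U in (ℂ/Λ)^k are pairwise distinct; for u ∈ U define A_j(u), B_j(u) ∈ ℤ by ∑_i u_i a_{ij} − z_j = A_j(u)τ + B_j(u). Let V ⊂ ℂ^k be a set of (det a)² points such that for each v ∈ V and each i, ∑_{j=1}^k a_{ij} v_j − w_i ∈ Λ, and the images of the points of V in (ℂ/Λ)^k are pairwise distinct; for v ∈ V define C_i(v), D_i(v) ∈ ℤ by ∑_j a_{ij} v_j − w_i = C_i(v)τ + D_i(v).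 Then the (det a)² × (det a)² matrix M with entries M(u,v) = e^{2πi ∑_{i=1}^k (A_i(u)·v_i − C_i(v)·u_i)}, indexed by u ∈ U and v ∈ V, is nondegenerate (invertible). -/
open Complex Filter
open scoped Topology

noncomputable section

/-!
Put `e(x) = exp (2πix)`. Solving `u a = z + τA + B` and `a v = w + τC + D` for `u` and `v`, the
`τ`-terms cancel from the exponent, and `M = diag (e (A a⁻¹ w)) * K * diag (e (-z a⁻¹ C))` with
`K (u, v) = e (A a⁻¹ D - B a⁻¹ C) = e ((-B, A) b⁻¹ (C, D))`, where `b = diag (a, a)`.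
The pairing `(x, δ) ↦ e (x b⁻¹ δ)` turns each integer row vector `x` into a character of the group
`ℤ²ᵏ / b ℤ²ᵏ` of order `|det a|²`, and `x` is determined by its character modulo `ℤ²ᵏ b`.
So the rows of `K` are pairwise distinct characters, and its `|det a|²` columns `(C, D)`, pairwise
distinct modulo `b ℤ²ᵏ`, run over the whole group. Distinct characters are linearly independent,
hence `K` is invertible.
-/

open Matrix
open scoped Real

namespace AddChar

variable {G M : Type*} [AddCommGroup G] [CommMonoid M]

def liftQuotient (ψ : AddChar G M) (L : AddSubgroup G) (hL : ∀ l ∈ L, ψ l = 1) :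
    AddChar (G ⧸ L) M :=
  toAddMonoidHomEquiv.symm (QuotientAddGroup.lift L (toAddMonoidHomEquiv ψ) hL)

@[simp]
theorem liftQuotient_mk (ψ : AddChar G M) (L : AddSubgroup G) (hL : ∀ l ∈ L, ψ l = 1) (g : G) :
    ψ.liftQuotient L hL g = ψ g :=
  rfl

theorem det_of_apply_ne_zero {R ι : Type*} [RCLike R] [Finite G] [Fintype ι] [DecidableEq ι]
    {ψ : ι → AddChar G R} (hψ : Function.Injective ψ) {g : ι → G}
    (hg : Function.Surjective g) :
    (of fun p q => ψ p (g q)).det ≠ 0 := by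
  have hrows : LinearIndependent R fun p q => ψ p (g q) :=
    ((AddChar.linearIndependent G R).comp ψ hψ).map' (LinearMap.funLeft R R g)
      (LinearMap.ker_eq_bot.mpr (LinearMap.funLeft_injective_of_surjective _ _ _ hg))
  exact ((isUnit_iff_isUnit_det _).mp (linearIndependent_rows_iff_isUnit.mp hrows)).ne_zero

end AddChar

namespace Matrix

variable {n R : Type*} [Fintype n]

theorem intCast_comp_vecMul [Ring R] (a : Matrix n n ℤ) (t : n → ℤ) :
    (Int.cast ∘ (t ᵥ* a) : n → R) = (Int.cast ∘ t) ᵥ* a.map Int.cast :=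
  funext (RingHom.map_vecMul (Int.castRingHom R) a t)

theorem intCast_comp_mulVec [Ring R] (a : Matrix n n ℤ) (s : n → ℤ) :
    (Int.cast ∘ (a *ᵥ s) : n → R) = a.map Int.cast *ᵥ (Int.cast ∘ s) :=
  funext (RingHom.map_mulVec (Int.castRingHom R) a s)

variable [DecidableEq n]

theorem isUnit_det_map_intCast [Field R] [CharZero R] {a : Matrix n n ℤ} (ha : a.det ≠ 0) :
    IsUnit (a.map (Int.cast : ℤ → R)).det := by
  rw [← Int.cast_det]
  exact isUnit_iff_ne_zero.mpr (by exact_mod_cast ha)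

theorem natCard_quotient_range_mulVecLin {b : Matrix n n ℤ} (hb : b.det ≠ 0) :
    Nat.card ((n → ℤ) ⧸ (LinearMap.range b.mulVecLin).toAddSubgroup) = b.det.natAbs := by
  let e := LinearEquiv.ofInjective b.mulVecLin (mulVec_injective_of_det_ne_zero hb)
  change Nat.card ((n → ℤ) ⧸ LinearMap.range b.mulVecLin) = _
  rw [← LinearMap.det_toLin' b, ← Submodule.natAbs_det_equiv _ e]
  rfl

def invPairing (b : Matrix n n ℤ) (x δ : n → ℤ) : ℂ :=
  (Int.cast ∘ x) ᵥ* (b.map Int.cast)⁻¹ ⬝ᵥ (Int.cast ∘ δ)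

def dualChar (b : Matrix n n ℤ) (x : n → ℤ) : AddChar (n → ℤ) ℂ where
  toFun δ := exp (2 * π * I * b.invPairing x δ)
  map_zero_eq_one' := by simp [invPairing, Function.comp_def]
  map_add_eq_mul' δ δ' := by
    rw [← Complex.exp_add, ← mul_add]
    simp only [invPairing, ← dotProduct_add]
    congr 4
    ext i
    simp

theorem dualChar_apply (b : Matrix n n ℤ) (x δ : n → ℤ) :
    b.dualChar x δ = exp (2 * π * I * b.invPairing x δ) :=
  rfl

theorem invPairing_mulVec {b : Matrix n n ℤ} (hb : b.det ≠ 0) (x s : n → ℤ) :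
    b.invPairing x (b *ᵥ s) = ((x ⬝ᵥ s : ℤ) : ℂ) := by
  rw [invPairing, intCast_comp_mulVec, dotProduct_mulVec, vecMul_vecMul,
    nonsing_inv_mul _ (isUnit_det_map_intCast hb), vecMul_one]
  exact (RingHom.map_dotProduct (Int.castRingHom ℂ) x s).symm

theorem dualChar_mulVec {b : Matrix n n ℤ} (hb : b.det ≠ 0) (x s : n → ℤ) :
    b.dualChar x (b *ᵥ s) = 1 := by
  rw [dualChar_apply, invPairing_mulVec hb, mul_comm, Complex.exp_int_mul_two_pi_mul_I]

theorem invPairing_sub_invPairing_single_one (b : Matrix n n ℤ) (x x' : n → ℤ) (j : n) :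
    b.invPairing x (Pi.single j 1) - b.invPairing x' (Pi.single j 1) =
      ((Int.cast ∘ (x - x') : n → ℂ) ᵥ* (b.map Int.cast)⁻¹) j := by
  have hsingle : (Int.cast ∘ Pi.single j 1 : n → ℂ) = Pi.single j 1 := by
    ext i
    by_cases hij : i = j <;> simp [hij]
  have hsub : (Int.cast ∘ (x - x') : n → ℂ) = Int.cast ∘ x - Int.cast ∘ x' := by
    ext i
    simp
  rw [invPairing, invPairing, hsingle, dotProduct_single_one, dotProduct_single_one, hsub,
    sub_vecMul, Pi.sub_apply]

theorem exists_sub_eq_vecMul_of_dualChar_eq {b : Matrix n n ℤ} (hb : b.det ≠ 0) {x x' : n → ℤ}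
    (h : b.dualChar x = b.dualChar x') : ∃ t, x - x' = t ᵥ* b := by
  have hint (j : n) : ∃ k : ℤ, ((Int.cast ∘ (x - x') : n → ℂ) ᵥ* (b.map Int.cast)⁻¹) j = k := by
    obtain ⟨k, hk⟩ := Complex.exp_eq_exp_iff_exists_int.mp (DFunLike.congr_fun h (Pi.single j 1))
    refine ⟨k, ?_⟩
    rw [← invPairing_sub_invPairing_single_one]
    have h2πI : 2 * (π : ℂ) * I ≠ 0 := by simp [Real.pi_ne_zero, I_ne_zero]
    apply mul_left_cancel₀ h2πI
    linear_combination hk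
  choose t ht using hint
  refine ⟨t, (Int.cast_injective (α := ℂ)).comp_left ?_⟩
  change Int.cast ∘ (x - x') = Int.cast ∘ (t ᵥ* b)
  rw [intCast_comp_vecMul, ← show (Int.cast ∘ (x - x') : n → ℂ) ᵥ* (b.map Int.cast)⁻¹ =
    Int.cast ∘ t from funext ht, vecMul_vecMul, nonsing_inv_mul _ (isUnit_det_map_intCast hb),
    vecMul_one]

theorem det_exp_invPairing_ne_zero {ι : Type*} [Fintype ι] [DecidableEq ι] {b : Matrix n n ℤ}
    (hb : b.det ≠ 0) (hι : Nat.card ι = b.det.natAbs) {x y : ι → n → ℤ}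
    (hx : ∀ p p' t, x p - x p' = t ᵥ* b → p = p')
    (hy : ∀ q q' s, y q - y q' = b *ᵥ s → q = q') :
    (of fun p q => exp (2 * π * I * b.invPairing (x p) (y q))).det ≠ 0 := by
  set L := (LinearMap.range b.mulVecLin).toAddSubgroup
  have hL (x : n → ℤ) : ∀ δ ∈ L, b.dualChar x δ = 1 := by
    rintro _ ⟨s, rfl⟩
    exact dualChar_mulVec hb x s
  have hcard := natCard_quotient_range_mulVecLin hb
  have : Finite ((n → ℤ) ⧸ L) := Nat.finite_of_card_ne_zero (hcard ▸ Int.natAbs_ne_zero.mpr hb)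
  have hψ : Function.Injective fun p => (b.dualChar (x p)).liftQuotient L (hL (x p)) := by
    intro p p' h
    have hchar : b.dualChar (x p) = b.dualChar (x p') := by
      ext δ
      simpa only [AddChar.liftQuotient_mk] using DFunLike.congr_fun h (δ : (n → ℤ) ⧸ L)
    obtain ⟨t, ht⟩ := exists_sub_eq_vecMul_of_dualChar_eq hb hchar
    exact hx p p' t ht
  have hg : Function.Injective fun q => (y q : (n → ℤ) ⧸ L) := by
    intro q q' h
    obtain ⟨s, hs⟩ := QuotientAddGroup.eq_iff_sub_mem.mp h
    exact hy q q' s hs.symm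
  exact AddChar.det_of_apply_ne_zero hψ (hg.bijective_of_nat_card_le (by rw [hι, hcard])).2

theorem invPairing_fromBlocks (a : Matrix n n ℤ) (A B C D : n → ℤ) :
    (fromBlocks a 0 0 a).invPairing (Sum.elim (-B) A) (Sum.elim C D) =
      ((Int.cast ∘ A) ᵥ* (a.map Int.cast)⁻¹) ⬝ᵥ (Int.cast ∘ D) -
        ((Int.cast ∘ B) ᵥ* (a.map Int.cast)⁻¹) ⬝ᵥ (Int.cast ∘ C) := by
  have hzero : (0 : Matrix n n ℤ).map (Int.cast : ℤ → ℂ) = 0 := by simp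
  have hx : (Int.cast ∘ Sum.elim (-B) A : n ⊕ n → ℂ) =
      Sum.elim (-(Int.cast ∘ B)) (Int.cast ∘ A) := by
    ext (i | i) <;> simp
  rw [invPairing, fromBlocks_map, hzero, inv_fromBlocks_zero₂₁_of_isUnit_iff _ _ _ Iff.rfl, hx,
    Sum.comp_elim, vecMul_fromBlocks]
  simp only [Sum.elim_comp_inl, Sum.elim_comp_inr, mul_zero, zero_mul, neg_zero, vecMul_zero,
    add_zero, zero_add, sumElim_dotProduct_sumElim, neg_vecMul, neg_dotProduct]
  ring

theorem sub_eq_smul_add_of_vecMul_eq [CommRing R] {α : Matrix n n R} (hα : IsUnit α.det)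
    {τ : R} {u u' z A A' B B' s t : n → R}
    (hu : u ᵥ* α = z + τ • A + B) (hu' : u' ᵥ* α = z + τ • A' + B')
    (hA : A - A' = s ᵥ* α) (hB : B - B' = t ᵥ* α) :
    u - u' = τ • s + t := by
  apply vecMul_injective_of_isUnit ((isUnit_iff_isUnit_det α).mpr hα)
  calc (u - u') ᵥ* α = τ • (A - A') + (B - B') := by
        rw [sub_vecMul, hu, hu', smul_sub]
        abel
    _ = (τ • s + t) ᵥ* α := by rw [hA, hB, add_vecMul, smul_vecMul]

theorem dotProduct_sub_dotProduct_eq_of_vecMul_eq_of_mulVec_eq [CommRing R] {α : Matrix n n R}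
    (hα : IsUnit α.det) {τ : R} {u v z w A B C D : n → R}
    (hu : u ᵥ* α = z + τ • A + B) (hv : α *ᵥ v = w + τ • C + D) :
    A ⬝ᵥ v - C ⬝ᵥ u =
      (A ᵥ* α⁻¹) ⬝ᵥ w - (z ᵥ* α⁻¹) ⬝ᵥ C + ((A ᵥ* α⁻¹) ⬝ᵥ D - (B ᵥ* α⁻¹) ⬝ᵥ C) := by
  have hu' : u = (z + τ • A + B) ᵥ* α⁻¹ := by
    rw [← hu, vecMul_vecMul, mul_nonsing_inv _ hα, vecMul_one]
  have hv' : v = α⁻¹ *ᵥ (w + τ • C + D) := by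
    rw [← hv, mulVec_mulVec, nonsing_inv_mul _ hα, one_mulVec]
  rw [hu', hv', dotProduct_mulVec, dotProduct_comm C]
  simp only [dotProduct_add, add_vecMul, add_dotProduct, smul_vecMul, smul_dotProduct,
    dotProduct_smul, smul_eq_mul]
  ring

theorem det_exp_add_add_ne_zero {ι : Type*} [Fintype ι] [DecidableEq ι] {f : ι → ι → ℂ}
    (hf : (of fun p q => exp (f p q)).det ≠ 0) (r c : ι → ℂ) :
    (of fun p q => exp (r p + f p q + c q)).det ≠ 0 := by
  have hfac : (of fun p q => exp (r p + f p q + c q)) =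
      diagonal (fun p => exp (r p)) * (of fun p q => exp (f p q)) *
        diagonal (fun q => exp (c q)) := by
    ext p q
    rw [mul_diagonal, diagonal_mul, of_apply, of_apply, Complex.exp_add, Complex.exp_add]
  rw [hfac, det_mul, det_mul, det_diagonal, det_diagonal]
  exact mul_ne_zero (mul_ne_zero (Finset.prod_ne_zero_iff.mpr fun _ _ => exp_ne_zero _) hf)
    (Finset.prod_ne_zero_iff.mpr fun _ _ => exp_ne_zero _)

end Matrix

section Lifts

variable {n ι : Type*} [Fintype n] [DecidableEq n] {τ : ℂ} {a : Matrix n n ℤ}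

theorem sub_mem_lam_of_vecMul_eq (ha : a.det ≠ 0) {u u' z : n → ℂ} {A A' B B' s t : n → ℤ}
    (hu : u ᵥ* a.map Int.cast = z + τ • (Int.cast ∘ A) + Int.cast ∘ B)
    (hu' : u' ᵥ* a.map Int.cast = z + τ • (Int.cast ∘ A') + Int.cast ∘ B')
    (hA : A - A' = s ᵥ* a) (hB : B - B' = t ᵥ* a) (i : n) :
    u i - u' i ∈ Lam τ := by
  have hcast {x x' r : n → ℤ} (h : x - x' = r ᵥ* a) :
      (Int.cast ∘ x : n → ℂ) - Int.cast ∘ x' = (Int.cast ∘ r) ᵥ* a.map Int.cast := by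
    rw [← intCast_comp_vecMul, ← h]
    ext
    simp
  have hdiff := sub_eq_smul_add_of_vecMul_eq (isUnit_det_map_intCast ha) hu hu' (hcast hA)
    (hcast hB)
  exact ⟨s i, t i, by simpa [mul_comm] using congr_fun hdiff i⟩

theorem eq_of_sumElim_sub_eq_vecMul_fromBlocks (ha : a.det ≠ 0) {z : n → ℂ} {u : ι → n → ℂ}
    {A B : ι → n → ℤ}
    (hu : ∀ p, u p ᵥ* a.map Int.cast = z + τ • (Int.cast ∘ A p) + Int.cast ∘ B p)
    (hudist : ∀ p p', (∀ i, u p i - u p' i ∈ Lam τ) → p = p') (p p' : ι)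
    (t : n ⊕ n → ℤ)
    (h : Sum.elim (-B p) (A p) - Sum.elim (-B p') (A p') = t ᵥ* fromBlocks a 0 0 a) :
    p = p' := by
  obtain ⟨hB, hA⟩ : -B p - -B p' = (t ∘ Sum.inl) ᵥ* a ∧ A p - A p' = (t ∘ Sum.inr) ᵥ* a := by
    simpa [← Sum.elim_sub_sub, vecMul_fromBlocks, Sum.elim_eq_iff] using h
  refine hudist p p' (sub_mem_lam_of_vecMul_eq ha (hu p) (hu p') hA (t := -(t ∘ Sum.inl)) ?_)
  rw [neg_vecMul, ← hB, neg_sub_neg, neg_sub]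

theorem eq_of_sumElim_sub_eq_fromBlocks_mulVec (ha : a.det ≠ 0) {w : n → ℂ} {v : ι → n → ℂ}
    {C D : ι → n → ℤ}
    (hv : ∀ q, a.map Int.cast *ᵥ v q = w + τ • (Int.cast ∘ C q) + Int.cast ∘ D q)
    (hvdist : ∀ q q', (∀ j, v q j - v q' j ∈ Lam τ) → q = q') (q q' : ι)
    (s : n ⊕ n → ℤ)
    (h : Sum.elim (C q) (D q) - Sum.elim (C q') (D q') = fromBlocks a 0 0 a *ᵥ s) :
    q = q' := by
  obtain ⟨hC, hD⟩ : C q - C q' = (s ∘ Sum.inl) ᵥ* aᵀ ∧ D q - D q' = (s ∘ Sum.inr) ᵥ* aᵀ := by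
    simpa [← Sum.elim_sub_sub, fromBlocks_mulVec, Sum.elim_eq_iff, vecMul_transpose] using h
  have hvT (q) : v q ᵥ* aᵀ.map Int.cast = w + τ • (Int.cast ∘ C q) + Int.cast ∘ D q := by
    rw [transpose_map, vecMul_transpose, hv]
  exact hvdist q q' (sub_mem_lam_of_vecMul_eq (by rwa [det_transpose]) (hvT q) (hvT q') hC hD)

end Lifts

theorem M_matrix_nondegenerate_general (τ : ℂ)
    (k : ℕ) (a : Matrix (Fin k) (Fin k) ℤ) (ha : a.det ≠ 0)
    (z w : Fin k → ℂ)
    (u : Fin (a.det.natAbs ^ 2) → Fin k → ℂ)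
    (A B : Fin (a.det.natAbs ^ 2) → Fin k → ℤ)
    (hu : ∀ p j, (∑ i, u p i * (a i j : ℂ)) - z j = (A p j : ℂ) * τ + (B p j : ℂ))
    (hudist : ∀ p q, (∀ i, u p i - u q i ∈ Lam τ) → p = q)
    (v : Fin (a.det.natAbs ^ 2) → Fin k → ℂ)
    (C D : Fin (a.det.natAbs ^ 2) → Fin k → ℤ)
    (hv : ∀ q i, (∑ j, (a i j : ℂ) * v q j) - w i = (C q i : ℂ) * τ + (D q i : ℂ))
    (hvdist : ∀ p q, (∀ j, v p j - v q j ∈ Lam τ) → p = q) :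
    (Matrix.of fun p q : Fin (a.det.natAbs ^ 2) =>
      Complex.exp (2 * (Real.pi : ℂ) * Complex.I *
        ∑ i, ((A p i : ℂ) * v q i - (C q i : ℂ) * u p i))).det ≠ 0 := by
  have hu' (p) : u p ᵥ* a.map Int.cast = z + τ • (Int.cast ∘ A p) + Int.cast ∘ B p := by
    ext j
    simpa [vecMul, dotProduct, mul_comm τ, add_assoc, sub_eq_iff_eq_add'] using hu p j
  have hv' (q) : a.map Int.cast *ᵥ v q = w + τ • (Int.cast ∘ C q) + Int.cast ∘ D q := by
    ext i
    simpa [mulVec, dotProduct, mul_comm τ, add_assoc, sub_eq_iff_eq_add'] using hv q i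
  have hK := det_exp_invPairing_ne_zero (b := fromBlocks a 0 0 a)
    (by rw [det_fromBlocks_zero₂₁]; exact mul_ne_zero ha ha)
    (by simp [det_fromBlocks_zero₂₁, Int.natAbs_mul, sq])
    (eq_of_sumElim_sub_eq_vecMul_fromBlocks ha hu' hudist)
    (eq_of_sumElim_sub_eq_fromBlocks_mulVec ha hv' hvdist)
  have hexp (p q) : 2 * π * I * ∑ i, ((A p i : ℂ) * v q i - (C q i : ℂ) * u p i) =
      2 * π * I * (((Int.cast ∘ A p) ᵥ* (a.map Int.cast)⁻¹) ⬝ᵥ w)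
        + 2 * π * I * (fromBlocks a 0 0 a).invPairing (Sum.elim (-B p) (A p)) (Sum.elim (C q) (D q))
        + -(2 * π * I * ((z ᵥ* (a.map Int.cast)⁻¹) ⬝ᵥ (Int.cast ∘ C q))) := by
    rw [invPairing_fromBlocks, Finset.sum_sub_distrib]
    change _ * ((Int.cast ∘ A p) ⬝ᵥ v q - (Int.cast ∘ C q) ⬝ᵥ u p) = _
    rw [dotProduct_sub_dotProduct_eq_of_vecMul_eq_of_mulVec_eq (isUnit_det_map_intCast ha)
      (hu' p) (hv' q)]
    ring
  simp_rw [hexp]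
  exact det_exp_add_add_ne_zero hK _ _

/-- The matrix `M(u,v) = e^{2πi∑(Aᵢ(u)vᵢ - Cᵢ(v)uᵢ)}`, indexed by the `(det a)²` lifts `u`
of solutions of `∑ũᵢaᵢⱼ = z̃ⱼ` and the `(det a)²` lifts `v` of solutions of
`∑aᵢⱼṽⱼ = w̃ᵢ`, is nondegenerate. -/
theorem M_matrix_nondegenerate (τ : ℂ) (hτ : 0 < τ.im)
    (k : ℕ) (a : Matrix (Fin k) (Fin k) ℤ) (ha : a.det ≠ 0)
    (z w : Fin k → ℂ)
    (u : Fin (a.det.natAbs ^ 2) → Fin k → ℂ)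
    (A B : Fin (a.det.natAbs ^ 2) → Fin k → ℤ)
    (hu : ∀ p j, (∑ i, u p i * (a i j : ℂ)) - z j = (A p j : ℂ) * τ + (B p j : ℂ))
    (hudist : ∀ p q, (∀ i, u p i - u q i ∈ Lam τ) → p = q)
    (v : Fin (a.det.natAbs ^ 2) → Fin k → ℂ)
    (C D : Fin (a.det.natAbs ^ 2) → Fin k → ℤ)
    (hv : ∀ q i, (∑ j, (a i j : ℂ) * v q j) - w i = (C q i : ℂ) * τ + (D q i : ℂ))
    (hvdist : ∀ p q, (∀ j, v p j - v q j ∈ Lam τ) → p = q) :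
    (Matrix.of fun p q : Fin (a.det.natAbs ^ 2) =>
      Complex.exp (2 * (Real.pi : ℂ) * Complex.I *
        ∑ i, ((A p i : ℂ) * v q i - (C q i : ℂ) * u p i))).det ≠ 0 :=
  M_matrix_nondegenerate_general τ k a ha z w u A B hu hudist v C D hv hvdist
end
end
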